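/- arXiv:2001.00424 — 2 statements merged into one kernel-verified Lean document; each statement's English description precedes it below -/
import Mathlib

section
/- For every integer n ≥ 3, the matching preclusion number of the n-dimensional bubble-sort star graph BS_n equals 2n − 3; that is, the minimum cardinality of a set F of edges of BS_n such that BS_n − F has no perfect matching (and no almost-perfect matching) is 2n − 3. -/
/-- The generating relation of the bubble-sort star graph: `u = v ∘ ⟨1,i⟩` for some
`i ∈ [2,n]` (0-based: swap of positions `0` and `i` with `i ≠ 0`), or `u = v ∘ ⟨i-1,i⟩`
for some `i ∈ [3,n]` (0-based: swap of consecutive positions `i, j = i+1` with `i ≥ 1`). -/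
def bssRel (n : ℕ) (u v : Equiv.Perm (Fin n)) : Prop :=
  (∃ i : Fin n, (i : ℕ) ≠ 0 ∧ u = v * Equiv.swap ⟨0, i.pos⟩ i) ∨
  (∃ i j : Fin n, (i : ℕ) + 1 = (j : ℕ) ∧ 1 ≤ (i : ℕ) ∧ u = v * Equiv.swap i j)

/-- The `n`-dimensional bubble-sort star graph `BS_n`, on the permutations of `{1,…,n}`. -/
def BS (n : ℕ) : SimpleGraph (Equiv.Perm (Fin n)) := SimpleGraph.fromRel (bssRel n)

/-- A set of edges `M` is a perfect matching of `G`: `M` consists of edges of `G` and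
every vertex lies in exactly one edge of `M`. -/
def IsPM {V : Type*} (G : SimpleGraph V) (M : Set (Sym2 V)) : Prop :=
  M ⊆ G.edgeSet ∧ ∀ v : V, ∃! e : Sym2 V, e ∈ M ∧ v ∈ e

/-- A set of edges `M` is an almost-perfect matching of `G`: there is exactly one
vertex lying in no edge of `M`, and every other vertex lies in exactly one edge of `M`. -/
def IsAPM {V : Type*} (G : SimpleGraph V) (M : Set (Sym2 V)) : Prop :=
  M ⊆ G.edgeSet ∧ ∃ w : V, (∀ e ∈ M, w ∉ e) ∧ ∀ v : V, v ≠ w → ∃! e : Sym2 V, e ∈ M ∧ v ∈ e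

/-- `G` has neither a perfect matching nor an almost-perfect matching. -/
def HasNoMatchings {V : Type*} (G : SimpleGraph V) : Prop :=
  (¬ ∃ M, IsPM G M) ∧ (¬ ∃ M, IsAPM G M)

/-- `(S, F)` is a strong matching preclusion set of `G`: deleting the vertices of `S`
(with all incident edges) and the edges of `F` leaves a graph with neither a perfect
matching nor an almost-perfect matching. -/
def IsSMPSet {V : Type*} (G : SimpleGraph V) (S : Set V) (F : Set (Sym2 V)) : Prop :=
  F ⊆ G.edgeSet ∧ HasNoMatchings ((G.deleteEdges F).induce (Sᶜ : Set V))

/-- `F` is a matching preclusion set of `G`: `G - F` has neither a perfect matching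
nor an almost-perfect matching. -/
def IsMPSet {V : Type*} (G : SimpleGraph V) (F : Set (Sym2 V)) : Prop :=
  F ⊆ G.edgeSet ∧ HasNoMatchings (G.deleteEdges F)

/-- `BS_n^i`: the set of permutations whose last entry equals `i`. -/
def BSslice {n : ℕ} (i : Fin n) : Set (Equiv.Perm (Fin n)) :=
  {a | a ⟨n - 1, Nat.sub_lt i.pos Nat.one_pos⟩ = i}

/-- `(V₁, V₂)` is a bipartition of `G`: the two classes partition the vertices and every
edge has one end in each class. -/
def Bipartition {V : Type*} (G : SimpleGraph V) (V1 V2 : Set V) : Prop :=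
  Disjoint V1 V2 ∧ V1 ∪ V2 = Set.univ ∧
    ∀ ⦃u v⦄, G.Adj u v → (u ∈ V1 ∧ v ∈ V2) ∨ (u ∈ V2 ∧ v ∈ V1)

/-!
`BS_n` is the Cayley graph of `Sym(n)` with respect to `2n - 3` transpositions. For each generator
`t` the pairs `{v, v t}` form a perfect matching, and distinct generators give edge-disjoint
matchings; so a matching preclusion set needs an edge of each of these `2n - 3` matchings.
Conversely, deleting the `2n - 3` edges at one vertex isolates it, and since `n!` is even there
is no almost-perfect matching either.
-/

open SimpleGraph

section Matchings

variable {V : Type*}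

lemma not_exists_isAPM_of_even_card [Finite V] (hV : Even (Nat.card V)) (G : SimpleGraph V) :
    ¬ ∃ M, IsAPM G M := by
  classical
  have := Fintype.ofFinite V
  rintro ⟨M, hMG, w, hw, hcover⟩
  -- `M` is a matching of `G` covering exactly `{w}ᶜ`, so `|V| - 1` is even.
  let H : G.Subgraph :=
    { verts := {w}ᶜ
      Adj := fun a b => s(a, b) ∈ M
      adj_sub := fun h => hMG h
      edge_vert := fun {a b} h ha => hw _ h (ha ▸ Sym2.mem_mk_left a b)
      symm := ⟨fun a b h => by rwa [Sym2.eq_swap]⟩ }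
  have hH : H.IsMatching := by
    intro v hv
    obtain ⟨e, ⟨he, hve⟩, huniq⟩ := hcover v hv
    refine ⟨Sym2.Mem.other hve, by simpa [H, Sym2.other_spec hve] using he, fun y hy => ?_⟩
    have hy : s(v, y) = e := huniq _ ⟨hy, Sym2.mem_mk_left _ _⟩
    rw [← Sym2.other_spec hve] at hy
    exact Sym2.congr_right.1 hy
  have hcard : H.verts.toFinset.card = Nat.card V - 1 := by
    simp [H, Set.toFinset_compl, Finset.card_compl, Nat.card_eq_fintype_card]
  have hpos : 0 < Nat.card V := Nat.card_pos_iff.2 ⟨⟨w⟩, inferInstance⟩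
  obtain ⟨a, ha⟩ := hV
  obtain ⟨b, hb⟩ := hcard ▸ hH.even_card
  omega

lemma not_exists_isPM_deleteEdges_incidenceSet (G : SimpleGraph V) (v : V) :
    ¬ ∃ M, IsPM (G.deleteEdges (G.incidenceSet v)) M := by
  rintro ⟨M, hMG, hcover⟩
  obtain ⟨e, ⟨he, hve⟩, -⟩ := hcover v
  obtain ⟨heG, heF⟩ := (G.edgeSet_deleteEdges _).subset (hMG he)
  exact heF ⟨heG, hve⟩

lemma isMPSet_incidenceSet [Finite V] (hV : Even (Nat.card V)) (G : SimpleGraph V) (v : V) :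
    IsMPSet G (G.incidenceSet v) :=
  ⟨G.incidenceSet_subset v, not_exists_isPM_deleteEdges_incidenceSet G v,
    not_exists_isAPM_of_even_card hV _⟩

lemma IsPM.deleteEdges {G : SimpleGraph V} {M F : Set (Sym2 V)} (hM : IsPM G M)
    (hMF : Disjoint M F) : IsPM (G.deleteEdges F) M :=
  ⟨fun _ he => (G.edgeSet_deleteEdges F).symm.subset
    ⟨hM.1 he, hMF.notMem_of_mem_left he⟩, hM.2⟩

lemma ncard_le_ncard_of_isMPSet [Finite V] {G : SimpleGraph V} {F : Set (Sym2 V)}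
    (hF : IsMPSet G F) {ι : Type*} {S : Set ι} (M : ι → Set (Sym2 V))
    (hM : ∀ i ∈ S, IsPM G (M i)) (hdisj : S.PairwiseDisjoint M) : S.ncard ≤ F.ncard := by
  have hmeet : ∀ i ∈ S, ∃ e, e ∈ M i ∧ e ∈ F := fun i hi => by
    by_contra! h
    exact hF.2.1 ⟨M i, (hM i hi).deleteEdges (Set.disjoint_left.2 h)⟩
  choose f hfM hfF using hmeet
  rw [← Nat.card_coe_set_eq, ← Nat.card_coe_set_eq]
  refine Nat.card_le_card_of_injective (fun i : S => ⟨f i i.2, hfF i i.2⟩) fun i j hij => ?_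
  by_contra hne
  refine Set.disjoint_left.1 (hdisj i.2 j.2 (Subtype.coe_ne_coe.2 hne)) (hfM i i.2) ?_
  have hij : f i i.2 = f j j.2 := congrArg Subtype.val hij
  exact hij ▸ hfM j j.2

end Matchings

section Cayley

variable {M : Type*} [Group M]

def rightMulPairs (g : M) : Set (Sym2 M) := Set.range fun v => s(v, v * g)

lemma isPM_rightMulPairs {s : Set M} {g : M} (hgs : g ∈ s) (hg : g * g = 1) (hg1 : g ≠ 1) :
    IsPM (mulCayley s) (rightMulPairs g) := by
  refine ⟨?_, fun v => ⟨s(v, v * g), ⟨⟨v, rfl⟩, Sym2.mem_mk_left _ _⟩, ?_⟩⟩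
  · rintro _ ⟨v, rfl⟩
    exact (mulCayley_adj' s _ _).2 ⟨by simpa using hg1, g, hgs, Or.inl rfl⟩
  · rintro _ ⟨⟨u, rfl⟩, hv⟩
    rcases Sym2.mem_iff.1 hv with rfl | rfl
    · rfl
    · rw [mul_assoc, hg, mul_one, Sym2.eq_swap]

lemma disjoint_rightMulPairs {g h : M} (hgh : g ≠ h) (hh : h * h = 1) :
    Disjoint (rightMulPairs g) (rightMulPairs h) := by
  refine Set.disjoint_left.2 ?_
  rintro _ ⟨v, rfl⟩ ⟨u, hu⟩
  rcases Sym2.eq_iff.1 hu with ⟨rfl, hvu⟩ | ⟨rfl, hvu⟩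
  · exact hgh (mul_left_cancel hvu).symm
  · -- `u * h * g = u` forces `g = h⁻¹ = h`
    rw [mul_assoc, mul_eq_left, mul_eq_one_iff_eq_inv] at hvu
    exact hgh (by rw [hvu, inv_eq_of_mul_eq_one_right hh])

lemma neighborSet_mulCayley {s : Set M} (hs : ∀ g ∈ s, g * g = 1) (hs1 : 1 ∉ s) (v : M) :
    (mulCayley s).neighborSet v = (v * ·) '' s := by
  ext w
  simp only [mem_neighborSet, mulCayley_adj', Set.mem_image]
  constructor
  · rintro ⟨-, g, hg, rfl | rfl⟩
    · exact ⟨g, hg, rfl⟩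
    · exact ⟨g, hg, by rw [mul_assoc, hs g hg, mul_one]⟩
  · rintro ⟨g, hg, rfl⟩
    exact ⟨fun h => hs1 (left_eq_mul.1 h ▸ hg), g, hg, Or.inl rfl⟩

lemma ncard_incidenceSet_mulCayley {s : Set M} (hs : ∀ g ∈ s, g * g = 1) (hs1 : 1 ∉ s)
    (v : M) : ((mulCayley s).incidenceSet v).ncard = s.ncard := by
  classical
  rw [Set.ncard_congr' ((mulCayley s).incidenceSetEquivNeighborSet v),
    neighborSet_mulCayley hs hs1, Set.ncard_image_of_injective _ (mul_right_injective v)]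

end Cayley

section BubbleSortStar

/-- The transpositions generating `BS_n`, in 0-based positions: `inl k` is the star
transposition `(0, k+1)`, `inr k` the bubble transposition `(k+1, k+2)`. -/
def bsGen (n : ℕ) : Fin (n - 1) ⊕ Fin (n - 2) → Equiv.Perm (Fin n)
  | .inl ⟨k, hk⟩ => Equiv.swap ⟨0, by omega⟩ ⟨k + 1, by omega⟩
  | .inr ⟨k, hk⟩ => Equiv.swap ⟨k + 1, by omega⟩ ⟨k + 2, by omega⟩

variable {n : ℕ}

lemma bssRel_iff {u v : Equiv.Perm (Fin n)} : bssRel n u v ↔ ∃ k, u = v * bsGen n k := by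
  constructor
  · rintro (⟨⟨i, hi⟩, hi0, rfl⟩ | ⟨⟨i, hi⟩, ⟨j, hj⟩, hij, hi1, rfl⟩)
    · simp only at hi0
      refine ⟨.inl ⟨i - 1, by omega⟩, ?_⟩
      simp only [bsGen, Nat.sub_add_cancel (Nat.pos_of_ne_zero hi0)]
    · simp only at hij hi1
      refine ⟨.inr ⟨i - 1, by omega⟩, ?_⟩
      simp only [bsGen]
      congr <;> omega
  · rintro ⟨⟨k, hk⟩ | ⟨k, hk⟩, rfl⟩
    · exact Or.inl ⟨⟨k + 1, by omega⟩, by simp, rfl⟩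
    · exact Or.inr ⟨⟨k + 1, by omega⟩, ⟨k + 2, by omega⟩, rfl, by simp, rfl⟩

lemma BS_eq_mulCayley (n : ℕ) : BS n = mulCayley (Set.range (bsGen n)) := by
  ext u v
  simp only [BS, mulCayley, fromRel_adj, bssRel_iff, Set.exists_range_iff]
  rw [or_comm]
  simp only [eq_comm]

lemma bsGen_mul_self (k : Fin (n - 1) ⊕ Fin (n - 2)) : bsGen n k * bsGen n k = 1 := by
  rcases k with ⟨k, hk⟩ | ⟨k, hk⟩ <;> exact Equiv.swap_mul_self _ _

lemma bsGen_ne_one (k : Fin (n - 1) ⊕ Fin (n - 2)) : bsGen n k ≠ 1 := by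
  rcases k with ⟨k, hk⟩ | ⟨k, hk⟩ <;> simp [bsGen, Equiv.swap_eq_one_iff]

lemma bsGen_injective : Function.Injective (bsGen n) := by
  rintro (⟨k, hk⟩ | ⟨k, hk⟩) (⟨l, hl⟩ | ⟨l, hl⟩) h
  all_goals
    have h0 := congr($h ⟨0, by omega⟩)
    have h1 := congr($h ⟨k + 1, by omega⟩)
    simp only [bsGen, Equiv.swap_apply_def, Fin.ext_iff] at h0 h1
    split_ifs at h0 h1 <;> simp_all

lemma ncard_range_bsGen (hn : 2 ≤ n) : (Set.range (bsGen n)).ncard = 2 * n - 3 := by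
  rw [Set.ncard_range_of_injective bsGen_injective, Nat.card_sum, Nat.card_fin, Nat.card_fin]
  omega

lemma even_card_perm_fin (hn : 2 ≤ n) : Even (Nat.card (Equiv.Perm (Fin n))) := by
  rw [Nat.card_perm, Nat.card_fin, even_iff_two_dvd]
  exact Nat.dvd_factorial two_pos hn

end BubbleSortStar

/-- For every `n ≥ 3`, the matching preclusion number of `BS_n` equals `2n - 3`:
`2n - 3` is the least possible size of a matching preclusion set of `BS_n`. -/
theorem mp_bubbleSortStar (n : ℕ) (hn : 3 ≤ n) :
    IsLeast {k : ℕ | ∃ F : Set (Sym2 (Equiv.Perm (Fin n))),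
      IsMPSet (BS n) F ∧ k = F.ncard} (2 * n - 3) := by
  have hgen : ∀ g ∈ Set.range (bsGen n), g * g = 1 := by
    rintro _ ⟨k, rfl⟩; exact bsGen_mul_self k
  have hone : (1 : Equiv.Perm (Fin n)) ∉ Set.range (bsGen n) := fun ⟨k, hk⟩ => bsGen_ne_one k hk
  rw [← ncard_range_bsGen (by omega), BS_eq_mulCayley]
  constructor
  · exact ⟨_, isMPSet_incidenceSet (even_card_perm_fin (by omega)) _ 1,
      (ncard_incidenceSet_mulCayley hgen hone 1).symm⟩
  · rintro _ ⟨F, hF, rfl⟩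
    exact ncard_le_ncard_of_isMPSet hF rightMulPairs
      (fun g hg => isPM_rightMulPairs hg (hgen g hg) (ne_of_mem_of_not_mem hg hone))
      fun g _ h hh hgh => disjoint_rightMulPairs hgh (hgen h hh)
end

section
/- For every integer n ≥ 4 and any two vertices u, v of the n-dimensional bubble-sort star graph BS_n lying in distinct bipartition classes (i.e. u and v are permutations of opposite parity), there exists a Hamiltonian path of BS_n from u to v. -/
/-!
The permutations of `Fin (n + 1)` with last entry `c` span a copy of `BS n`, the slice `c`, and
every vertex `a` has the neighbours `a * swap 0 n` and `a * swap (n - 1) n` in the slices `a 0`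
and `a (n - 1)`. Assume that `BS n` is Hamiltonian laceable. If `u` and `v` lie in different
slices, visit all slices one after another: in each slice, run a Hamiltonian path of the copy of
`BS n` to an exit vertex of the opposite sign whose first entry is the label of the next slice;
two further positions let us fix the sign of the exit vertex. If `u` and `v` lie in the same
slice, cut the first edge `u y` off a Hamiltonian path of that slice and join `u` and `y` through
all the other slices. The base case `BS 4` is settled by exhibiting a Hamiltonian path from the
identity to every odd permutation; left translations are automorphisms.
-/

open Equiv Equiv.Perm

namespace SimpleGraph

variable {V W : Type*} {G : SimpleGraph V} {H : SimpleGraph W}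

namespace Walk

def IsHamiltonianOn {u v : V} (p : G.Walk u v) (s : Set V) : Prop :=
  p.support.Nodup ∧ ∀ x, x ∈ p.support ↔ x ∈ s

variable {u v x y : V} {s t : Set V}

lemma isHamiltonianOn_univ [DecidableEq V] {p : G.Walk u v} :
    p.IsHamiltonianOn Set.univ ↔ p.IsHamiltonian := by
  refine ⟨fun hp => ((isPath_def p).2 hp.1).isHamiltonian_of_mem fun w => (hp.2 w).2 trivial,
    fun hp => ⟨hp.isPath.support_nodup, fun w => by simp [hp.mem_support w]⟩⟩

lemma IsHamiltonianOn.append_cons {p : G.Walk u x} {q : G.Walk y v} (hp : p.IsHamiltonianOn s)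
    (hq : q.IsHamiltonianOn t) (hst : Disjoint s t) (h : G.Adj x y) :
    (p.append (cons h q)).IsHamiltonianOn (s ∪ t) := by
  rw [IsHamiltonianOn, support_append, support_cons, List.tail_cons, List.nodup_append]
  refine ⟨⟨hp.1, hq.1, fun a ha b hb => hst.ne_of_mem ((hp.2 a).1 ha) ((hq.2 b).1 hb)⟩,
    fun z => ?_⟩
  simp [hp.2 z, hq.2 z]

lemma IsHamiltonianOn.cons {p : G.Walk x v} (hp : p.IsHamiltonianOn s) (h : G.Adj u x)
    (hu : u ∉ s) : (Walk.cons h p).IsHamiltonianOn (insert u s) := by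
  refine ⟨List.nodup_cons.2 ⟨fun hu' => hu ((hp.2 u).1 hu'), hp.1⟩, fun z => ?_⟩
  simp [hp.2 z]

lemma IsHamiltonianOn.of_cons {p : G.Walk x v} {h : G.Adj u x}
    (hp : (Walk.cons h p).IsHamiltonianOn s) : p.IsHamiltonianOn (s \ {u}) := by
  obtain ⟨hu, hnd⟩ := List.nodup_cons.1 hp.1
  refine ⟨hnd, fun z =>
    ⟨fun hz => ⟨(hp.2 z).1 (List.mem_cons_of_mem u hz), ?_⟩, fun hz => ?_⟩⟩
  · rintro rfl; exact hu hz
  · exact (List.mem_cons.1 ((hp.2 z).2 hz.1)).resolve_left hz.2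

lemma IsHamiltonianOn.map (f : G →g H) (hf : Function.Injective f) {p : G.Walk u v}
    (hp : p.IsHamiltonianOn s) : (p.map f).IsHamiltonianOn (f '' s) := by
  refine ⟨by simpa [support_map] using hp.1.map hf, fun z => ?_⟩
  simp [support_map, hp.2]

end Walk

lemma exists_walk_support_eq_scanl {M ι : Type*} [Monoid M] {G : SimpleGraph M} (g : ι → M)
    (hg : ∀ x i, G.Adj x (x * g i)) (x : M) (w : List ι) :
    ∃ p : G.Walk x (x * (w.map g).prod), p.support = (w.map g).scanl (· * ·) x := by
  induction w generalizing x with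
  | nil => exact ⟨Walk.nil.copy rfl (by simp), by simp⟩
  | cons i w ih =>
    obtain ⟨p, hp⟩ := ih (x * g i)
    exact ⟨(Walk.cons (hg x i) p).copy rfl (by simp [mul_assoc]), by simp [hp]⟩

end SimpleGraph

lemma List.scanl_mul_mul_left {M : Type*} [Monoid M] (a x : M) (l : List M) :
    l.scanl (· * ·) (a * x) = (l.scanl (· * ·) x).map (a * ·) := by
  induction l generalizing x with
  | nil => simp
  | cons y l ih => simp [ih, mul_assoc]

lemma Equiv.Perm.exists_apply_eq_apply_eq_sign {α : Type*} [Fintype α] [DecidableEq α]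
    (hα : 3 < Fintype.card α) {i j c d : α} (hij : i ≠ j) (hcd : c ≠ d) (ε : ℤˣ) :
    ∃ z : Perm α, z i = c ∧ z j = d ∧ sign z = ε := by
  obtain ⟨k, hk, l, hl, hkl⟩ := Finset.one_lt_card.1 (show 1 < (Finset.univ \ {i, j}).card by
    rw [Finset.card_sdiff_of_subset (Finset.subset_univ _), Finset.card_pair hij,
      Finset.card_univ]
    omega)
  simp only [Finset.mem_sdiff, Finset.mem_univ, Finset.mem_insert, Finset.mem_singleton,
    true_and, not_or] at hk hl
  set g₁ := swap i c
  set g := swap (g₁ j) d * g₁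
  have hgi : g i = c := by
    have : c ≠ g₁ j := by rw [← swap_apply_left i c]; exact g₁.injective.ne hij
    simp [g, g₁, swap_apply_of_ne_of_ne this hcd]
  have hgj : g j = d := by simp [g]
  by_cases hg : sign g = ε
  · exact ⟨g, hgi, hgj, hg⟩
  · refine ⟨g * swap k l, ?_, ?_, ?_⟩
    · rw [Perm.mul_apply, swap_apply_of_ne_of_ne (Ne.symm hk.1) (Ne.symm hl.1), hgi]
    · rw [Perm.mul_apply, swap_apply_of_ne_of_ne (Ne.symm hk.2) (Ne.symm hl.2), hgj]
    · rw [Perm.sign_mul, sign_swap hkl, Int.units_ne_iff_eq_neg.1 hg, neg_mul_neg, mul_one]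

lemma List.exists_nodup_cons_getLast_eq {α : Type*} [Fintype α] [DecidableEq α] (A : Finset α)
    {c d : α} (hcd : c ≠ d) (hc : c ∉ A) (hd : d ∉ A) :
    ∃ S : List α, (c :: S).Nodup ∧ (c :: S).getLast (List.cons_ne_nil c S) = d ∧
      ∀ x, x ∈ c :: S ↔ x ∉ A := by
  refine ⟨(Finset.univ \ insert c (insert d A)).toList ++ [d], ?_, by simp, fun x => ?_⟩
  · simp only [List.nodup_cons, List.nodup_append, List.mem_append, Finset.mem_toList]
    simpa [hcd, Finset.nodup_toList] using fun _ _ h _ => h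
  · by_cases hxc : x = c
    · simp [hxc, hc]
    · by_cases hxd : x = d <;> simp [hxc, hxd, hd]

namespace BS

open SimpleGraph

variable {n : ℕ} {u v : Perm (Fin n)}

lemma exists_swap_of_bssRel (h : bssRel n u v) : ∃ a b, a ≠ b ∧ u = v * swap a b := by
  rcases h with ⟨i, hi, rfl⟩ | ⟨i, j, hij, -, rfl⟩
  · exact ⟨_, i, fun h => hi (congrArg Fin.val h).symm, rfl⟩
  · exact ⟨i, j, fun h => by rw [h] at hij; omega, rfl⟩

lemma bssRel_symm (h : bssRel n u v) : bssRel n v u := by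
  rcases h with ⟨i, hi, rfl⟩ | ⟨i, j, hij, hi, rfl⟩
  · exact Or.inl ⟨i, hi, by rw [mul_swap_mul_self]⟩
  · exact Or.inr ⟨i, j, hij, hi, by rw [mul_swap_mul_self]⟩

lemma adj_iff : (BS n).Adj u v ↔ bssRel n u v := by
  refine ⟨fun ⟨_, h⟩ => h.elim id bssRel_symm, fun h => ⟨?_, Or.inl h⟩⟩
  obtain ⟨a, b, hab, huv⟩ := exists_swap_of_bssRel h
  rintro rfl
  exact hab (swap_eq_one_iff.1 (mul_eq_left.1 huv.symm))

lemma sign_eq_neg_of_adj (h : (BS n).Adj u v) : sign u = -sign v := by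
  obtain ⟨a, b, hab, rfl⟩ := exists_swap_of_bssRel (adj_iff.1 h)
  rw [Perm.sign_mul, sign_swap hab, mul_neg_one]

lemma adj_mul_swap_zero (σ : Perm (Fin n)) (i : Fin n) (hi : (i : ℕ) ≠ 0) :
    (BS n).Adj σ (σ * swap ⟨0, i.pos⟩ i) :=
  adj_iff.2 (bssRel_symm (Or.inl ⟨i, hi, rfl⟩))

lemma adj_mul_swap_of_val_add_one_eq (σ : Perm (Fin n)) {i j : Fin n} (hij : (i : ℕ) + 1 = j)
    (hi : 1 ≤ (i : ℕ)) : (BS n).Adj σ (σ * swap i j) :=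
  adj_iff.2 (bssRel_symm (Or.inr ⟨i, j, hij, hi, rfl⟩))

/-- `sliceEquiv n (c, σ) = swap (last n) c * σ'`, where `σ'` extends `σ` by fixing `last n`. -/
def sliceEquiv (n : ℕ) : Fin (n + 1) × Perm (Fin n) ≃ Perm (Fin (n + 1)) :=
  ((finSuccEquivLast.prodCongr (Equiv.refl _)).trans decomposeOption.symm).trans
    finSuccEquivLast.symm.permCongr

lemma sliceEquiv_apply_last (c : Fin (n + 1)) (σ : Perm (Fin n)) :
    sliceEquiv n (c, σ) (Fin.last n) = c := by
  simp [sliceEquiv]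

lemma exists_sliceEquiv_eq {c : Fin (n + 1)} {a : Perm (Fin (n + 1))} (ha : a (Fin.last n) = c) :
    ∃ σ, sliceEquiv n (c, σ) = a := by
  obtain ⟨⟨c', σ⟩, rfl⟩ := (sliceEquiv n).surjective a
  rw [sliceEquiv_apply_last] at ha
  exact ⟨σ, by rw [ha]⟩

lemma sliceEquiv_mul_swap (c : Fin (n + 1)) (σ : Perm (Fin n)) (a b : Fin n) :
    sliceEquiv n (c, σ * swap a b) = sliceEquiv n (c, σ) * swap a.castSucc b.castSucc := by
  have h : optionCongr (σ * swap a b) = optionCongr σ * swap (some a) (some b) := by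
    rw [← optionCongr_swap, Perm.mul_def, Perm.mul_def, optionCongr_trans]
  simp only [sliceEquiv, Equiv.trans_apply, prodCongr_apply, Prod.map, decomposeOption_symm_apply,
    Equiv.refl_apply, h, ← mul_assoc, permCongr_mul]
  simp [permCongr_def]

lemma sign_sliceEquiv (c : Fin (n + 1)) (σ : Perm (Fin n)) :
    sign (sliceEquiv n (c, σ)) = sign (swap (Fin.last n) c) * sign σ := by
  rw [← sign_permCongr finSuccEquivLast (swap _ c)]
  simp [sliceEquiv, permCongr_def]

def sliceHom (c : Fin (n + 1)) : BS n →g BS (n + 1) where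
  toFun σ := sliceEquiv n (c, σ)
  map_rel' {σ τ} h := by
    rw [adj_iff] at h ⊢
    rcases h with ⟨i, hi, rfl⟩ | ⟨i, j, hij, hi, rfl⟩
    · exact Or.inl ⟨i.castSucc, hi, sliceEquiv_mul_swap c τ _ i⟩
    · exact Or.inr ⟨i.castSucc, j.castSucc, hij, hi, sliceEquiv_mul_swap c τ i j⟩

lemma sliceHom_injective (c : Fin (n + 1)) : Function.Injective (sliceHom c) :=
  fun _ _ h => congrArg Prod.snd ((sliceEquiv n).injective h)

lemma range_sliceHom (c : Fin (n + 1)) : Set.range (sliceHom c) = {a | a (Fin.last n) = c} := by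
  ext a
  exact ⟨by rintro ⟨σ, rfl⟩; exact sliceEquiv_apply_last c σ, exists_sliceEquiv_eq⟩

lemma exists_adj_apply_last_ne (hn : 2 ≤ n) (y : Perm (Fin (n + 1))) (e : Fin (n + 1)) :
    ∃ y', (BS (n + 1)).Adj y y' ∧ y' (Fin.last n) ≠ y (Fin.last n) ∧
      y' (Fin.last n) ≠ e := by
  have h0 : (0 : Fin (n + 1)) ≠ Fin.last n := by simp [Fin.ext_iff]; omega
  by_cases h : y 0 = e
  · set i : Fin (n + 1) := ⟨n - 1, by omega⟩
    have hi0 : i ≠ 0 := by simp [i, Fin.ext_iff]; omega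
    have hil : i ≠ Fin.last n := by simp [i, Fin.ext_iff]; omega
    refine ⟨y * swap i (Fin.last n),
      adj_mul_swap_of_val_add_one_eq y (by simp [i]; omega) (by simp [i]; omega), ?_, ?_⟩
    · simpa using hil
    · simpa [← h] using hi0
  · exact ⟨y * swap 0 (Fin.last n), adj_mul_swap_zero y (Fin.last n) (by simp; omega),
      by simpa using h0, by simpa using h⟩

def IsHamiltonianLaceable (n : ℕ) : Prop :=
  ∀ u v : Perm (Fin n), sign u ≠ sign v → ∃ p : (BS n).Walk u v, p.IsHamiltonian

namespace IsHamiltonianLaceable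

lemma exists_isHamiltonianOn_slice (hL : IsHamiltonianLaceable n) {c : Fin (n + 1)}
    {u v : Perm (Fin (n + 1))} (hu : u (Fin.last n) = c) (hv : v (Fin.last n) = c)
    (huv : sign u ≠ sign v) :
    ∃ p : (BS (n + 1)).Walk u v, p.IsHamiltonianOn {a | a (Fin.last n) = c} := by
  obtain ⟨σ, rfl⟩ := exists_sliceEquiv_eq hu
  obtain ⟨τ, rfl⟩ := exists_sliceEquiv_eq hv
  obtain ⟨p, hp⟩ := hL σ τ fun h => huv (by rw [sign_sliceEquiv, sign_sliceEquiv, h])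
  refine ⟨p.map (sliceHom c), ?_⟩
  have h := (Walk.isHamiltonianOn_univ.2 hp).map _ (sliceHom_injective c)
  rw [Set.image_univ, range_sliceHom] at h
  exact h

lemma exists_isHamiltonianOn_slices (hL : IsHamiltonianLaceable n) (hn : 3 ≤ n)
    (S : List (Fin (n + 1))) {c : Fin (n + 1)} (hS : (c :: S).Nodup) {u v : Perm (Fin (n + 1))}
    (hu : u (Fin.last n) = c) (hv : v (Fin.last n) = (c :: S).getLast (List.cons_ne_nil c S))
    (huv : sign u ≠ sign v) :
    ∃ p : (BS (n + 1)).Walk u v, p.IsHamiltonianOn {a | a (Fin.last n) ∈ c :: S} := by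
  induction S generalizing c u with
  | nil => simpa using hL.exists_isHamiltonianOn_slice hu hv huv
  | cons d S ih =>
    obtain ⟨hcS, hS⟩ := List.nodup_cons.1 hS
    obtain ⟨z, hzc, hzd, hz⟩ := exists_apply_eq_apply_eq_sign (by simp; omega)
      (by simp [Fin.ext_iff]; omega : Fin.last n ≠ 0)
      (fun h : c = d => hcS (h ▸ List.mem_cons_self)) (-sign u)
    obtain ⟨p, hp⟩ := hL.exists_isHamiltonianOn_slice hu hzc (hz ▸ units_ne_neg_self _)
    have hzz' : (BS (n + 1)).Adj z (z * swap 0 (Fin.last n)) :=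
      adj_mul_swap_zero z (Fin.last n) (by simp; omega)
    obtain ⟨q, hq⟩ := ih hS (u := z * swap 0 (Fin.last n)) (by simp [hzd]) (by simpa using hv)
      (by rw [sign_eq_neg_of_adj hzz'.symm, hz, neg_neg]; exact huv)
    refine ⟨p.append (Walk.cons hzz' q), ?_⟩
    convert hp.append_cons hq ?_ hzz' using 1
    · ext a; simp
    · exact Set.disjoint_left.2 fun a ha hb => hcS (ha ▸ hb)

lemma exists_isHamiltonianOn_of_apply_last_ne (hL : IsHamiltonianLaceable n) (hn : 3 ≤ n)
    {u v : Perm (Fin (n + 1))} (hc : u (Fin.last n) ≠ v (Fin.last n)) (huv : sign u ≠ sign v) :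
    ∃ p : (BS (n + 1)).Walk u v, p.IsHamiltonianOn Set.univ := by
  obtain ⟨S, hS, hlast, hmem⟩ := List.exists_nodup_cons_getLast_eq ∅ hc (by simp) (by simp)
  obtain ⟨p, hp⟩ := hL.exists_isHamiltonianOn_slices hn S hS rfl hlast.symm huv
  exact ⟨p, by simpa [hmem] using hp⟩

lemma exists_isHamiltonianOn_of_apply_last_eq (hL : IsHamiltonianLaceable n) (hn : 3 ≤ n)
    {c : Fin (n + 1)} {u v : Perm (Fin (n + 1))} (hu : u (Fin.last n) = c)
    (hv : v (Fin.last n) = c) (huv : sign u ≠ sign v) :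
    ∃ p : (BS (n + 1)).Walk u v, p.IsHamiltonianOn Set.univ := by
  obtain ⟨p, hp⟩ := hL.exists_isHamiltonianOn_slice hu hv huv
  cases p with
  | nil => exact absurd rfl huv
  | @cons _ y _ huy q =>
  have hyc : y (Fin.last n) = c := (hp.2 y).1 (by simp)
  set u' := u * swap 0 (Fin.last n)
  have huu' : (BS (n + 1)).Adj u u' := adj_mul_swap_zero u (Fin.last n) (by simp; omega)
  have hu'c : u' (Fin.last n) ≠ c := by
    simpa [u', ← hu] using (by simp [Fin.ext_iff]; omega : (0 : Fin (n + 1)) ≠ Fin.last n)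
  obtain ⟨y', hyy', hy'c, hy'u'⟩ := exists_adj_apply_last_ne (by omega) y (u' (Fin.last n))
  rw [hyc] at hy'c
  obtain ⟨S, hS, hlast, hmem⟩ := List.exists_nodup_cons_getLast_eq {c} (Ne.symm hy'u')
    (by simpa using hu'c) (by simpa using hy'c)
  obtain ⟨r, hr⟩ := hL.exists_isHamiltonianOn_slices hn S hS rfl hlast.symm (by
    rw [sign_eq_neg_of_adj huu'.symm, sign_eq_neg_of_adj hyy'.symm,
      sign_eq_neg_of_adj huy.symm, neg_neg]
    exact neg_units_ne_self _)
  simp only [hmem, Finset.mem_singleton] at hr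
  refine ⟨Walk.cons huu' (r.append (Walk.cons hyy'.symm q)), ?_⟩
  convert (hr.append_cons hp.of_cons ?_ hyy'.symm).cons huu' ?_ using 1
  · ext a
    simp only [Set.mem_insert_iff, Set.mem_union, Set.mem_ofPred_eq, Set.mem_sdiff,
      Set.mem_singleton_iff, Set.mem_univ]
    tauto
  · exact Set.disjoint_left.2 fun a ha hb => ha hb.1
  · simp [hu]

theorem succ (hL : IsHamiltonianLaceable n) (hn : 3 ≤ n) : IsHamiltonianLaceable (n + 1) := by
  intro u v huv
  simp_rw [← Walk.isHamiltonianOn_univ]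
  by_cases hc : u (Fin.last n) = v (Fin.last n)
  · exact hL.exists_isHamiltonianOn_of_apply_last_eq hn rfl hc.symm huv
  · exact hL.exists_isHamiltonianOn_of_apply_last_ne hn hc huv

end IsHamiltonianLaceable

def gens4 : Fin 5 → Perm (Fin 4) := ![swap 0 1, swap 0 2, swap 0 3, swap 1 2, swap 2 3]

lemma adj_mul_gens4 (σ : Perm (Fin 4)) (i : Fin 5) : (BS 4).Adj σ (σ * gens4 i) := by
  fin_cases i
  · exact adj_mul_swap_zero σ 1 (by decide)
  · exact adj_mul_swap_zero σ 2 (by decide)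
  · exact adj_mul_swap_zero σ 3 (by decide)
  · exact adj_mul_swap_of_val_add_one_eq σ (i := 1) (j := 2) rfl le_rfl
  · exact adj_mul_swap_of_val_add_one_eq σ (i := 2) (j := 3) rfl (by decide)

-- Found by computer search: for each odd permutation, a word in `gens4` tracing a Hamiltonian
-- path from `1` to it.
def hamiltonianWords4 : List (List (Fin 5)) :=
  [[0, 1, 0, 1, 0, 2, 0, 1, 0, 1, 2, 0, 1, 3, 0, 1, 4, 0, 1, 3, 0, 1, 2],
   [0, 1, 2, 0, 1, 0, 1, 0, 2, 0, 1, 3, 0, 1, 4, 0, 1, 3, 0, 1, 4, 0, 1],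
   [0, 1, 0, 1, 0, 2, 0, 1, 0, 1, 0, 2, 0, 1, 3, 0, 1, 4, 0, 1, 0, 1, 0],
   [1, 0, 1, 0, 2, 0, 1, 0, 1, 0, 2, 0, 1, 0, 4, 0, 1, 0, 1, 0, 2, 0, 2],
   [0, 1, 0, 1, 0, 2, 0, 1, 0, 1, 0, 2, 1, 0, 1, 0, 4, 0, 1, 0, 1, 0, 2],
   [0, 1, 0, 1, 0, 2, 1, 0, 1, 0, 2, 0, 1, 0, 1, 0, 2, 0, 1, 0, 1, 0, 2],
   [0, 1, 0, 1, 0, 2, 0, 1, 0, 1, 0, 2, 0, 1, 3, 0, 1, 4, 0, 1, 3, 0, 1],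
   [0, 1, 0, 1, 2, 0, 1, 0, 1, 0, 2, 0, 1, 3, 0, 1, 4, 1, 0, 1, 0, 1, 2],
   [0, 1, 0, 1, 0, 2, 0, 1, 0, 1, 0, 2, 0, 1, 3, 0, 2, 0, 1, 0, 1, 0, 4],
   [0, 1, 0, 1, 0, 2, 0, 1, 2, 0, 1, 2, 0, 1, 3, 0, 1, 2, 0, 1, 2, 0, 1],
   [0, 1, 0, 1, 0, 2, 0, 1, 0, 1, 0, 2, 0, 1, 0, 4, 0, 1, 0, 1, 0, 2, 0],
   [0, 1, 0, 1, 0, 2, 0, 1, 0, 1, 0, 2, 0, 1, 3, 0, 1, 4, 1, 0, 1, 0, 1]]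

set_option maxRecDepth 100000 in
lemma exists_mem_hamiltonianWords4_prod_eq :
    ∀ σ : Perm (Fin 4), sign σ = -1 →
      ∃ w ∈ hamiltonianWords4, (w.map gens4).prod = σ := by
  decide

set_option maxRecDepth 100000 in
lemma nodup_scanl_of_mem_hamiltonianWords4 :
    ∀ w ∈ hamiltonianWords4, w.length = 23 ∧ ((w.map gens4).scanl (· * ·) 1).Nodup := by
  decide

theorem isHamiltonianLaceable_four : IsHamiltonianLaceable 4 := by
  intro u v huv
  have hodd : sign (u⁻¹ * v) = -1 := by
    rw [Perm.sign_mul, sign_inv, Int.units_ne_iff_eq_neg.1 huv.symm, mul_neg, Int.units_mul_self]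
  obtain ⟨w, hw, hwσ⟩ := exists_mem_hamiltonianWords4_prod_eq _ hodd
  obtain ⟨hlen, hnodup⟩ := nodup_scanl_of_mem_hamiltonianWords4 w hw
  obtain ⟨p, hp⟩ := exists_walk_support_eq_scanl gens4 adj_mul_gens4 u w
  obtain rfl : u * (w.map gens4).prod = v := by rw [hwσ, mul_inv_cancel_left]
  refine ⟨p, Walk.isHamiltonian_iff_isPath_and_length_eq.2 ⟨(Walk.isPath_def p).2 ?_, ?_⟩⟩
  · rw [hp, ← mul_one u, List.scanl_mul_mul_left]
    exact hnodup.map (mul_right_injective u)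
  · have := congrArg List.length hp
    simp only [Walk.length_support, List.length_scanl, List.length_map, hlen] at this
    simp [Fintype.card_perm, Nat.factorial]
    omega

theorem isHamiltonianLaceable {n : ℕ} (hn : 4 ≤ n) : IsHamiltonianLaceable n := by
  induction n, hn using Nat.le_induction with
  | base => exact isHamiltonianLaceable_four
  | succ m hm ih => exact ih.succ (by omega)

end BS

/-- For every `n ≥ 4` and any two vertices `u, v` of `BS_n` lying in distinct
bipartition classes (permutations of opposite parity), there exists a Hamiltonian
path of `BS_n` from `u` to `v`. -/
theorem bubbleSortStar_hamiltonian_path (n : ℕ) (hn : 4 ≤ n)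
    (u v : Equiv.Perm (Fin n)) (hpar : Equiv.Perm.sign u ≠ Equiv.Perm.sign v) :
    ∃ p : (BS n).Walk u v, p.IsHamiltonian :=
  BS.isHamiltonianLaceable hn u v hpar
end
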